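/- Let g : ℝ → ℝ be continuous, non-decreasing and everywhere positive, let C > 0, q ≥ 0, θ > 0 be constants with θq < τ < θ(q+1), let R ∈ (0,∞), and let v : [0,R) → ℝ solve the Cauchy problem (★) with v(0) = a. Then for every δ with 1 < δ < θ/(θ(q+1) − τ) and every R' ∈ (0,R), the integral ∫_0^{R'} |v''(r)|^δ dr is finite; that is, v belongs to W^{2,δ} on (0,R'). -/

import Mathlib

/-!
On `[0, R']` the function `g ∘ v` is squeezed between two positive constants, so the integral
`F r = ∫₀ʳ s^{τ-1} g(v s) ds` is comparable to `r^τ`. Differentiating `v' = C r^{-q} F^{1/θ}`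
then gives `|v''(r)| ≲ r^{τ/θ - q - 1}`, and `δ < θ/(θ(q+1) - τ)` is exactly the condition
making `r^{(τ/θ - q - 1)δ}` integrable at `0`.
-/

open Real MeasureTheory Set Filter Topology ENNReal

/-- The right-hand side of the Cauchy problem (★):
`C · r^{-q} · (∫_0^r s^{τ-1} g(v(s)) ds)^{1/θ}`. -/
noncomputable def cauchyRHS (C q τ θ : ℝ) (g v : ℝ → ℝ) (r : ℝ) : ℝ :=
  C * r ^ (-q) * (∫ s in (0:ℝ)..r, s ^ (τ - 1) * g (v s)) ^ (1 / θ)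

/-- `v : ℝ → ℝ` solves the Cauchy problem (★) on `[0, R)` (with `R ∈ (0, ∞]` an
extended nonnegative real): `v` is continuous on `[0, R)`, `v 0 = a`, and at every
`r ∈ (0, R)` the derivative of `v` exists and is given by `cauchyRHS`. -/
def SolvesCauchy (C q τ θ a : ℝ) (g : ℝ → ℝ) (R : ℝ≥0∞) (v : ℝ → ℝ) : Prop :=
  ContinuousOn v {r : ℝ | 0 ≤ r ∧ ENNReal.ofReal r < R} ∧
  v 0 = a ∧
  ∀ r : ℝ, 0 < r → ENNReal.ofReal r < R → HasDerivAt v (cauchyRHS C q τ θ g v r) r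

/-- The Keller–Osserman condition:
`∫_b^∞ (∫_0^t g(s) ds)^{-1/(θ+1)} dt = +∞` for every `b > 0`. -/
def KellerOsserman (θ : ℝ) (g : ℝ → ℝ) : Prop :=
  ∀ b : ℝ, 0 < b →
    ∫⁻ t in Set.Ioi b, ENNReal.ofReal ((∫ s in (0:ℝ)..t, g s) ^ (-(1 / (θ + 1)))) = ⊤

noncomputable def weightedPrimitive (τ : ℝ) (h : ℝ → ℝ) (r : ℝ) : ℝ :=
  ∫ s in (0 : ℝ)..r, s ^ (τ - 1) * h s

section WeightedPrimitive

variable {τ ρ r : ℝ} {h : ℝ → ℝ}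

theorem integral_rpow_sub_one (hτ : 0 < τ) (r : ℝ) :
    ∫ s in (0 : ℝ)..r, s ^ (τ - 1) = r ^ τ / τ := by
  rw [integral_rpow (Or.inl (by linarith)), sub_add_cancel, zero_rpow hτ.ne', sub_zero]

theorem intervalIntegrable_rpow_sub_one_mul (hτ : 0 < τ) (hh : ContinuousOn h (uIcc 0 r)) :
    IntervalIntegrable (fun s => s ^ (τ - 1) * h s) volume 0 r :=
  (intervalIntegral.intervalIntegrable_rpow' (by linarith)).mul_continuousOn hh

theorem hasDerivAt_weightedPrimitive (hτ : 0 < τ) (hh : ContinuousOn h (Icc 0 ρ))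
    (hr : r ∈ Ioo 0 ρ) : HasDerivAt (weightedPrimitive τ h) (r ^ (τ - 1) * h r) r := by
  have hcont : ContinuousOn (fun s => s ^ (τ - 1) * h s) (Ioo 0 ρ) :=
    (continuousOn_id.rpow_const fun x hx => Or.inl hx.1.ne').mul (hh.mono Ioo_subset_Icc_self)
  exact intervalIntegral.integral_hasDerivAt_right
    (intervalIntegrable_rpow_sub_one_mul hτ
      (hh.mono (by rw [uIcc_of_le hr.1.le]; exact Icc_subset_Icc_right hr.2.le)))
    (hcont.stronglyMeasurableAtFilter isOpen_Ioo r hr)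
    (hcont.continuousAt (isOpen_Ioo.mem_nhds hr))

theorem weightedPrimitive_le (hτ : 0 < τ) (hr : 0 ≤ r) (hh : ContinuousOn h (Icc 0 r))
    {M : ℝ} (hM : ∀ s ∈ Icc 0 r, h s ≤ M) : weightedPrimitive τ h r ≤ M / τ * r ^ τ := by
  calc weightedPrimitive τ h r ≤ ∫ s in (0 : ℝ)..r, M * s ^ (τ - 1) := by
        refine intervalIntegral.integral_mono_on hr
          (intervalIntegrable_rpow_sub_one_mul hτ (by rwa [uIcc_of_le hr]))
          ((intervalIntegral.intervalIntegrable_rpow' (by linarith)).const_mul M) fun s hs => ?_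
        rw [mul_comm M]
        exact mul_le_mul_of_nonneg_left (hM s hs) (rpow_nonneg hs.1 _)
    _ = M / τ * r ^ τ := by
        rw [intervalIntegral.integral_const_mul, integral_rpow_sub_one hτ]; ring

theorem le_weightedPrimitive (hτ : 0 < τ) (hr : 0 ≤ r) (hh : ContinuousOn h (Icc 0 r))
    {m : ℝ} (hm : ∀ s ∈ Icc 0 r, m ≤ h s) : m / τ * r ^ τ ≤ weightedPrimitive τ h r := by
  calc m / τ * r ^ τ = ∫ s in (0 : ℝ)..r, m * s ^ (τ - 1) := by
        rw [intervalIntegral.integral_const_mul, integral_rpow_sub_one hτ]; ring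
    _ ≤ weightedPrimitive τ h r := by
        refine intervalIntegral.integral_mono_on hr
          ((intervalIntegral.intervalIntegrable_rpow' (by linarith)).const_mul m)
          (intervalIntegrable_rpow_sub_one_mul hτ (by rwa [uIcc_of_le hr])) fun s hs => ?_
        rw [mul_comm m]
        exact mul_le_mul_of_nonneg_left (hm s hs) (rpow_nonneg hs.1 _)

end WeightedPrimitive

theorem IsCompact.exists_pos_bounds {α : Type*} [TopologicalSpace α] {s : Set α} {f : α → ℝ}
    (hs : IsCompact s) (hne : s.Nonempty) (hf : ContinuousOn f s) (hpos : ∀ x ∈ s, 0 < f x) :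
    ∃ m M, 0 < m ∧ 0 < M ∧ ∀ x ∈ s, m ≤ f x ∧ f x ≤ M := by
  obtain ⟨x₀, hx₀, hmin⟩ := hs.exists_isMinOn hne hf
  obtain ⟨x₁, hx₁, hmax⟩ := hs.exists_isMaxOn hne hf
  exact ⟨f x₀, f x₁, hpos x₀ hx₀, hpos x₁ hx₁, fun x hx => ⟨hmin hx, hmax hx⟩⟩

theorem rpow_le_max_mul_rpow {x c₁ c₂ t : ℝ} (p : ℝ) (hc₁ : 0 < c₁) (ht : 0 < t)
    (hlo : c₁ * t ≤ x) (hhi : x ≤ c₂ * t) : x ^ p ≤ max (c₁ ^ p) (c₂ ^ p) * t ^ p := by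
  have hc₂ : 0 < c₂ := pos_of_mul_pos_left ((mul_pos hc₁ ht).trans_le (hlo.trans hhi)) ht.le
  rcases le_total 0 p with hp | hp
  · calc x ^ p ≤ (c₂ * t) ^ p := rpow_le_rpow ((mul_pos hc₁ ht).le.trans hlo) hhi hp
      _ ≤ max (c₁ ^ p) (c₂ ^ p) * t ^ p := by
        rw [mul_rpow hc₂.le ht.le]; gcongr; exact le_max_right _ _
  · calc x ^ p ≤ (c₁ * t) ^ p := rpow_le_rpow_of_nonpos (by positivity) hlo hp
      _ ≤ max (c₁ ^ p) (c₂ ^ p) * t ^ p := by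
        rw [mul_rpow hc₁.le ht.le]; gcongr; exact le_max_left _ _

theorem hasDerivAt_const_mul_rpow_mul_rpow {F : ℝ → ℝ} {f r : ℝ} (C q θ : ℝ)
    (hF : HasDerivAt F f r) (hr : 0 < r) (hFr : 0 < F r) :
    HasDerivAt (fun x => C * x ^ (-q) * F x ^ (1 / θ))
      (C * (-q * r ^ (-q - 1)) * F r ^ (1 / θ) + C * r ^ (-q) * (f * (1 / θ) * F r ^ (1 / θ - 1)))
      r := by
  have hpow : HasDerivAt (fun x => C * x ^ (-q)) (C * (-q * r ^ (-q - 1))) r := by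
    simpa [neg_sub, sub_eq_add_neg] using
      (hasDerivAt_rpow_const (p := -q) (Or.inl hr.ne')).const_mul C
  exact hpow.mul (hF.rpow_const (Or.inl hFr.ne'))

theorem abs_cauchyRHS_deriv_le {C q θ τ r y Φ₁ Φ₂ A₁ A₂ M : ℝ} (hr : 0 < r)
    (hΦ₁ : |Φ₁| ≤ A₁ * r ^ (τ * (1 / θ))) (hΦ₂ : |Φ₂| ≤ A₂ * r ^ (τ * (1 / θ - 1)))
    (hy : |y| ≤ M * r ^ (τ - 1)) :
    |C * (-q * r ^ (-q - 1)) * Φ₁ + C * r ^ (-q) * (y * (1 / θ) * Φ₂)|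
      ≤ |C| * (|q| * A₁ + |1 / θ| * M * A₂) * r ^ (τ / θ - q - 1) := by
  have hexp₁ : r ^ (-q - 1) * r ^ (τ * (1 / θ)) = r ^ (τ / θ - q - 1) := by
    rw [← rpow_add hr]; ring_nf
  have hexp₂ : r ^ (-q) * r ^ (τ - 1) * r ^ (τ * (1 / θ - 1)) = r ^ (τ / θ - q - 1) := by
    rw [← rpow_add hr, ← rpow_add hr]; ring_nf
  have hr₁ := (rpow_pos_of_pos hr (-q - 1)).le
  have hr₂ := (rpow_pos_of_pos hr (-q)).le
  calc _ ≤ |C| * |q| * r ^ (-q - 1) * |Φ₁| + |C| * r ^ (-q) * |y| * |1 / θ| * |Φ₂| := by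
        refine (abs_add_le _ _).trans_eq ?_
        simp only [abs_mul, abs_neg, abs_of_nonneg hr₁, abs_of_nonneg hr₂]; ring
    _ ≤ |C| * |q| * r ^ (-q - 1) * (A₁ * r ^ (τ * (1 / θ)))
        + |C| * r ^ (-q) * (M * r ^ (τ - 1)) * |1 / θ| * (A₂ * r ^ (τ * (1 / θ - 1))) := by
        have hMr : 0 ≤ M * r ^ (τ - 1) := (abs_nonneg _).trans hy
        gcongr
    _ = |C| * |q| * A₁ * (r ^ (-q - 1) * r ^ (τ * (1 / θ)))
        + |C| * |1 / θ| * M * A₂ * (r ^ (-q) * r ^ (τ - 1) * r ^ (τ * (1 / θ - 1))) := by ring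
    _ = _ := by rw [hexp₁, hexp₂]; ring

namespace SolvesCauchy

variable {C q τ θ a R : ℝ} {g v : ℝ → ℝ}

theorem continuousOn_Icc (hv : SolvesCauchy C q τ θ a g (ENNReal.ofReal R) v) {ρ : ℝ}
    (hρR : ρ < R) : ContinuousOn v (Icc 0 ρ) :=
  hv.1.mono fun _ hx => ⟨hx.1, (ofReal_lt_ofReal_iff_of_nonneg hx.1).2 (hx.2.trans_lt hρR)⟩

theorem deriv_deriv_eq (hv : SolvesCauchy C q τ θ a g (ENNReal.ofReal R) v) {r : ℝ}
    (hr : r ∈ Ioo 0 R) : deriv (deriv v) r = deriv (cauchyRHS C q τ θ g v) r := by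
  refine EventuallyEq.deriv_eq ?_
  filter_upwards [isOpen_Ioo.mem_nhds hr] with x hx
  exact (hv.2.2 x hx.1 ((ofReal_lt_ofReal_iff_of_nonneg hx.1.le).2 hx.2)).deriv

theorem exists_abs_deriv_deriv_le (hv : SolvesCauchy C q τ θ a g (ENNReal.ofReal R) v)
    (hg_cont : Continuous g) (hg_pos : ∀ t, 0 < g t) (hτ : 0 < τ) {ρ : ℝ} (hρ : 0 ≤ ρ)
    (hρR : ρ < R) :
    ∃ K, 0 ≤ K ∧ ∀ r ∈ Ioo 0 ρ, |deriv (deriv v) r| ≤ K * r ^ (τ / θ - q - 1) := by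
  have hcont : ContinuousOn (fun s => g (v s)) (Icc 0 ρ) :=
    hg_cont.comp_continuousOn (hv.continuousOn_Icc hρR)
  obtain ⟨m, M, hm, hM, hbounds⟩ :=
    isCompact_Icc.exists_pos_bounds (nonempty_Icc.2 hρ) hcont fun s _ => hg_pos (v s)
  set A : ℝ → ℝ := fun p => max ((m / τ) ^ p) ((M / τ) ^ p)
  refine ⟨|C| * (|q| * A (1 / θ) + |1 / θ| * M * A (1 / θ - 1)), by positivity, fun r hr => ?_⟩
  have hr₀ : 0 < r := hr.1
  set F := weightedPrimitive τ fun s => g (v s)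
  have hsub : Icc 0 r ⊆ Icc 0 ρ := Icc_subset_Icc_right hr.2.le
  have hFlo : m / τ * r ^ τ ≤ F r :=
    le_weightedPrimitive hτ hr₀.le (hcont.mono hsub) fun s hs => (hbounds s (hsub hs)).1
  have hFhi : F r ≤ M / τ * r ^ τ :=
    weightedPrimitive_le hτ hr₀.le (hcont.mono hsub) fun s hs => (hbounds s (hsub hs)).2
  have hFpos : 0 < F r := lt_of_lt_of_le (by positivity) hFlo
  have hFpow : ∀ p, |F r ^ p| ≤ A p * r ^ (τ * p) := fun p => by
    rw [abs_of_pos (rpow_pos_of_pos hFpos p), rpow_mul hr₀.le]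
    exact rpow_le_max_mul_rpow p (by positivity) (by positivity) hFlo hFhi
  have hintegrand : |r ^ (τ - 1) * g (v r)| ≤ M * r ^ (τ - 1) := by
    rw [abs_of_pos (mul_pos (rpow_pos_of_pos hr₀ _) (hg_pos _)), mul_comm M]
    exact mul_le_mul_of_nonneg_left (hbounds r (Ioo_subset_Icc_self hr)).2 (by positivity)
  have hderiv : HasDerivAt (cauchyRHS C q τ θ g v) _ r :=
    hasDerivAt_const_mul_rpow_mul_rpow C q θ (hasDerivAt_weightedPrimitive hτ hcont hr) hr₀ hFpos
  rw [hv.deriv_deriv_eq ⟨hr₀, hr.2.trans hρR⟩, hderiv.deriv]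
  exact abs_cauchyRHS_deriv_le hr₀ (hFpow _) (hFpow _) hintegrand

end SolvesCauchy

theorem integrableOn_abs_rpow_of_abs_le_rpow {f : ℝ → ℝ} {b K α δ : ℝ} (hf : Measurable f)
    (hδ : 0 ≤ δ) (hαδ : -1 < α * δ) (hK : 0 ≤ K) (hbound : ∀ r ∈ Ioo 0 b, |f r| ≤ K * r ^ α) :
    IntegrableOn (fun r => |f r| ^ δ) (Ioo 0 b) := by
  have hdom : IntegrableOn (fun r => K ^ δ * r ^ (α * δ)) (Ioo 0 b) :=
    ((intervalIntegral.intervalIntegrable_rpow' hαδ).const_mul _).def'.mono_set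
      (Ioo_subset_Ioc_self.trans Ioc_subset_uIoc)
  refine hdom.mono' (by fun_prop) ((ae_restrict_iff' measurableSet_Ioo).2 (ae_of_all _ ?_))
  intro r hr
  rw [norm_of_nonneg (by positivity), rpow_mul hr.1.le, ← mul_rpow hK (rpow_nonneg hr.1.le _)]
  exact rpow_le_rpow (abs_nonneg _) (hbound r hr) hδ

theorem W2delta_regularity_general
    (g : ℝ → ℝ) (hg_cont : Continuous g) (hg_pos : ∀ t, 0 < g t)
    (C q θ τ a : ℝ) (hq : 0 ≤ q)
    (hτ1 : θ * q < τ) (hτ2 : τ < θ * (q + 1))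
    (R : ℝ) (v : ℝ → ℝ)
    (hv : SolvesCauchy C q τ θ a g (ENNReal.ofReal R) v)
    (δ : ℝ) (hδ1 : 1 < δ) (hδ2 : δ < θ / (θ * (q + 1) - τ))
    (R' : ℝ) (hR' : R' ∈ Set.Ioo 0 R) :
    IntegrableOn (fun r => |deriv (deriv v) r| ^ δ) (Set.Ioo 0 R') := by
  have hθ : 0 < θ := by linarith
  have hτ : 0 < τ := (mul_nonneg hθ.le hq).trans_lt hτ1
  obtain ⟨K, hK, hbound⟩ := hv.exists_abs_deriv_deriv_le hg_cont hg_pos hτ hR'.1.le hR'.2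
  have hαδ : -1 < (τ / θ - q - 1) * δ := by
    have hδθ := (lt_div_iff₀ (by linarith : 0 < θ * (q + 1) - τ)).1 hδ2
    have hexp : (τ / θ - q - 1) * δ * θ = -(δ * (θ * (q + 1) - τ)) := by field_simp; ring
    nlinarith
  exact integrableOn_abs_rpow_of_abs_le_rpow (measurable_deriv _) (by linarith) hαδ hK hbound

/-- Case (iii) of Theorem 1.1: when `θq < τ < θ(q+1)`, any solution of (★) on `[0, R)`
belongs to `W^{2,δ}(0, R')` for every `1 < δ < θ/(θ(q+1) - τ)` and `R' ∈ (0, R)`,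
i.e. `∫_0^{R'} |v''(r)|^δ dr < ∞`. -/
theorem W2delta_regularity
    (g : ℝ → ℝ) (hg_cont : Continuous g) (hg_mono : Monotone g) (hg_pos : ∀ t, 0 < g t)
    (C q θ τ a : ℝ) (hC : 0 < C) (hq : 0 ≤ q) (hθ : 0 < θ)
    (hτ1 : θ * q < τ) (hτ2 : τ < θ * (q + 1))
    (R : ℝ) (hR : 0 < R) (v : ℝ → ℝ)
    (hv : SolvesCauchy C q τ θ a g (ENNReal.ofReal R) v)
    (δ : ℝ) (hδ1 : 1 < δ) (hδ2 : δ < θ / (θ * (q + 1) - τ))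
    (R' : ℝ) (hR' : R' ∈ Set.Ioo 0 R) :
    IntegrableOn (fun r => |deriv (deriv v) r| ^ δ) (Set.Ioo 0 R') :=
  W2delta_regularity_general g hg_cont hg_pos C q θ τ a hq hτ1 hτ2 R v hv δ hδ1 hδ2 R' hR'
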